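/- Let A be a finite set of candidates with |A| ≥ 3 and let N = {1,…,n} be a finite set of voters. Every social welfare function F mapping profiles of linear orders over A to weak orders over A that satisfies Independence of Irrelevant Alternatives (IIA) and Non-Imposition (NI) is either null (at every profile, all candidates are socially indifferent), dictatorial, or anti-dictatorial. (Wilson's Theorem.) -/

import Mathlib

/-- A voter preference: a strict linear (complete, transitive, antisymmetric) order on `A`. -/
abbrev Pref (A : Type*) := {r : A → A → Prop // IsStrictTotalOrder A r}

/-- A weak order: a complete, reflexive and transitive binary relation on `A`. -/
abbrev WeakOrd (A : Type*) := {r : A → A → Prop // Reflexive r ∧ Transitive r ∧ Total r}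

/-- The strict (asymmetric) part of a relation. -/
def StrictPart {A : Type*} (r : A → A → Prop) (a b : A) : Prop := r a b ∧ ¬ r b a

/-- Two relations agree on the pair `{a, b}`. -/
def AgreeOnPair {A : Type*} (r r' : A → A → Prop) (a b : A) : Prop :=
  (r a b ↔ r' a b) ∧ (r b a ↔ r' b a)

/-- Independence of Irrelevant Alternatives. -/
def IIA {A : Type*} {n : ℕ} (F : (Fin n → Pref A) → WeakOrd A) : Prop :=
  ∀ (P P' : Fin n → Pref A) (a b : A),
    (∀ i, AgreeOnPair (P i).1 (P' i).1 a b) → AgreeOnPair (F P).1 (F P').1 a b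

/-- Non-Imposition: every social ranking of a pair arises at some profile. -/
def NonImposition {A : Type*} {n : ℕ} (F : (Fin n → Pref A) → WeakOrd A) : Prop :=
  ∀ a b : A, ∃ P : Fin n → Pref A, (F P).1 a b

/-- Null rule: all candidates are socially indifferent at every profile. -/
def NullRule {A : Type*} {n : ℕ} (F : (Fin n → Pref A) → WeakOrd A) : Prop :=
  ∀ (P : Fin n → Pref A) (a b : A), (F P).1 a b ∧ (F P).1 b a

/-- Dictatorship: some voter's strict preferences are always reproduced socially. -/
def Dictatorial {A : Type*} {n : ℕ} (F : (Fin n → Pref A) → WeakOrd A) : Prop :=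
  ∃ i : Fin n, ∀ (P : Fin n → Pref A) (a b : A), (P i).1 a b → StrictPart (F P).1 a b

/-- Anti-dictatorship: some voter's strict preferences are always socially inverted. -/
def AntiDictatorial {A : Type*} {n : ℕ} (F : (Fin n → Pref A) → WeakOrd A) : Prop :=
  ∃ i : Fin n, ∀ (P : Fin n → Pref A) (a b : A), (P i).1 a b → StrictPart (F P).1 b a

/-!
By IIA, society's ranking of a pair depends only on the set of voters ranking it one way, and
every acyclic ranking of three candidates by each voter is realised by some profile. With
non-imposition, a pair on which society is always indifferent makes every pair so; hence, unless
the rule is null, society is strict at a unanimous profile of any pair. The direction of that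
verdict cannot differ between two pairs sharing a candidate (non-imposition would fail on the
third pair), so `F` or its reverse is weakly Pareto, and Arrow's argument, shrinking decisive
coalitions down to a single voter, produces a dictator for it.
-/

section

open Function Finset

variable {A : Type*}

namespace Pref

theorem asymm (p : Pref A) {a b : A} (h : p.1 a b) : ¬ p.1 b a :=
  have := p.2; _root_.asymm h

theorem ne_of_rel (p : Pref A) {a b : A} (h : p.1 a b) : a ≠ b :=
  have := p.2; ne_of_irrefl h

theorem rel_swap_iff (p : Pref A) {a b : A} (hab : a ≠ b) : p.1 b a ↔ ¬ p.1 a b := by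
  have := p.2
  refine ⟨p.asymm, fun h => ?_⟩
  rcases trichotomous_of p.1 a b with h' | h' | h'
  exacts [(h h').elim, (hab h').elim, h']

/-- Ties of `r` are broken by a well-order of `A`. -/
def ofRank (r : A → ℕ) : Pref A :=
  have hinj : Injective fun x => (r x, x) := fun _ _ h => congrArg Prod.snd h
  haveI := hinj.isStrictTotalOrder_onFun
    (r := (Prod.Lex (· < ·) WellOrderingRel : ℕ × A → ℕ × A → Prop))
  ⟨swap (Prod.Lex (· < ·) WellOrderingRel on fun x => (r x, x)), inferInstance⟩

theorem ofRank_iff (r : A → ℕ) {x y : A} (h : r x ≠ r y) : (ofRank r).1 x y ↔ r y < r x := by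
  have hlt : ∀ {x y}, r y < r x → (ofRank r).1 x y := fun h => Prod.Lex.left _ _ h
  refine ⟨fun hxy => ?_, hlt⟩
  by_contra hyx
  exact (ofRank r).asymm hxy (hlt (lt_of_le_of_ne (not_lt.mp hyx) h))

open Classical in
/-- The hypotheses say that the orientation of the triangle `a, b, c` is acyclic. -/
theorem exists_of_triangle {a b c : A} (hab : a ≠ b) (hbc : b ≠ c) (hac : a ≠ c)
    (p q r : Prop) (hpqr : p → q → r) (hrpq : r → p ∨ q) :
    ∃ P : Pref A, (P.1 a b ↔ p) ∧ (P.1 b c ↔ q) ∧ (P.1 a c ↔ r) := by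
  let rank : A → ℕ := fun x =>
    if x = a then 1 + (if p then 1 else 0) + (if r then 1 else 0)
    else if x = b then 1 + (if p then 0 else 1) + (if q then 1 else 0)
    else if x = c then 1 + (if q then 0 else 1) + (if r then 0 else 1) else 0
  refine ⟨ofRank rank, ?_⟩
  have hba := hab.symm; have hcb := hbc.symm; have hca := hac.symm
  by_cases hp : p <;> by_cases hq : q <;> by_cases hr : r <;>
    simp_all [ofRank_iff, rank]

theorem exists_rel {a b : A} (hab : a ≠ b) : ∃ P : Pref A, P.1 a b := by
  classical
  refine ⟨ofRank fun x => if x = a then 1 else 0, (ofRank_iff _ ?_).mpr ?_⟩ <;> simp [hab.symm]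

end Pref

namespace WeakOrd

variable (w : WeakOrd A) {a b c : A}

def reverse : WeakOrd A :=
  ⟨fun a b => w.1 b a, fun a => w.2.1 a, fun _ _ _ h₁ h₂ => w.2.2.1 h₂ h₁, fun a b => w.2.2.2 b a⟩

theorem strictPart_of_strictPart_of_rel (h₁ : StrictPart w.1 a b) (h₂ : w.1 b c) :
    StrictPart w.1 a c :=
  ⟨w.2.2.1 h₁.1 h₂, fun h => h₁.2 (w.2.2.1 h₂ h)⟩

theorem strictPart_trans (h₁ : StrictPart w.1 a b) (h₂ : StrictPart w.1 b c) :
    StrictPart w.1 a c :=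
  w.strictPart_of_strictPart_of_rel h₁ h₂.1

theorem rel_of_not_strictPart (h : ¬ StrictPart w.1 a b) : w.1 b a :=
  (w.2.2.2 a b).elim (fun hab => not_not.mp fun hba => h ⟨hab, hba⟩) id

theorem rel_iff_of_indiff (hab : w.1 a b) (hba : w.1 b a) (c : A) :
    (w.1 a c ↔ w.1 b c) ∧ (w.1 c a ↔ w.1 c b) :=
  ⟨⟨w.2.2.1 hba, w.2.2.1 hab⟩, ⟨fun h => w.2.2.1 h hab, fun h => w.2.2.1 h hba⟩⟩

end WeakOrd

variable {n : ℕ} {F : (Fin n → Pref A) → WeakOrd A}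

theorem IIA.reverse (hIIA : IIA F) : IIA fun P => (F P).reverse :=
  fun P P' a b h => (hIIA P P' a b h).symm

theorem NonImposition.reverse (hNI : NonImposition F) : NonImposition fun P => (F P).reverse :=
  fun a b => hNI b a

theorem IIA.agreeOnPair_of_iff (hIIA : IIA F) {a b : A} (hab : a ≠ b) {P P' : Fin n → Pref A}
    (h : ∀ i, (P i).1 a b ↔ (P' i).1 a b) : AgreeOnPair (F P).1 (F P').1 a b :=
  hIIA P P' a b fun i => ⟨h i, by rw [(P i).rel_swap_iff hab, (P' i).rel_swap_iff hab, h i]⟩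

theorem IIA.strictPart_of_strictPart (hIIA : IIA F) {a b : A} (hab : a ≠ b)
    {P P' : Fin n → Pref A} (h : ∀ i, (P i).1 a b ↔ (P' i).1 a b)
    (hP : StrictPart (F P).1 a b) : StrictPart (F P').1 a b :=
  have h' := hIIA.agreeOnPair_of_iff hab h
  ⟨h'.1.mp hP.1, mt h'.2.mpr hP.2⟩

/-- Arrow's "almost decisive": the voters ranking `a` above `b` are exactly those of `S`. -/
def DecisiveOn (F : (Fin n → Pref A) → WeakOrd A) (S : Finset (Fin n)) (a b : A) : Prop :=
  ∀ P : Fin n → Pref A, (∀ i, (P i).1 a b ↔ i ∈ S) → StrictPart (F P).1 a b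

def Decisive (F : (Fin n → Pref A) → WeakOrd A) (S : Finset (Fin n)) : Prop :=
  ∀ a b : A, a ≠ b → DecisiveOn F S a b

def NullOn (F : (Fin n → Pref A) → WeakOrd A) (a b : A) : Prop :=
  ∀ P : Fin n → Pref A, (F P).1 a b ∧ (F P).1 b a

theorem decisiveOn_of_strictPart (hIIA : IIA F) {S : Finset (Fin n)} {a b : A} (hab : a ≠ b)
    {R : Fin n → Pref A} (hR : ∀ i, (R i).1 a b ↔ i ∈ S) (h : StrictPart (F R).1 a b) :
    DecisiveOn F S a b := fun _ hP =>
  hIIA.strictPart_of_strictPart hab (fun i => (hR i).trans (hP i).symm) h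

theorem forall_ne_of_move {Q : A → A → Prop} (hA : ∀ a b : A, ∃ c, c ≠ a ∧ c ≠ b)
    (left : ∀ {a b c}, a ≠ b → c ≠ a → c ≠ b → Q a b → Q c b)
    (right : ∀ {a b c}, a ≠ b → c ≠ a → c ≠ b → Q a b → Q a c)
    {a b : A} (hab : a ≠ b) (h : Q a b) {x y : A} (hxy : x ≠ y) : Q x y := by
  have left' : ∀ {a b c}, a ≠ b → c ≠ b → Q a b → Q c b := fun {a _ c} hab hcb h =>
    (eq_or_ne c a).elim (fun hca => hca ▸ h) fun hca => left hab hca hcb h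
  have right' : ∀ {a b c}, a ≠ b → c ≠ a → Q a b → Q a c := fun {_ b c} hab hca h =>
    (eq_or_ne c b).elim (fun hcb => hcb ▸ h) fun hcb => right hab hca hcb h
  by_cases hxb : x = b
  · subst hxb
    obtain ⟨c, hca, hcb⟩ := hA a x
    exact right' hab.symm hxy.symm <| left' hca hab.symm <| right' hcb hca.symm <| left' hab hcb h
  · exact right' hxb hxy.symm (left' hab hxb h)

theorem NullOn.symm {a b : A} (h : NullOn F a b) : NullOn F b a := fun P => (h P).symm

section Null

variable (hIIA : IIA F) (hNI : NonImposition F)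
include hNI

theorem nullOn_of_agreeOnPair {a b : A} (h : ∀ P P', AgreeOnPair (F P).1 (F P').1 a b) :
    NullOn F a b := by
  obtain ⟨P₁, h₁⟩ := hNI a b
  obtain ⟨P₂, h₂⟩ := hNI b a
  exact fun P => ⟨(h P P₁).1.mpr h₁, (h P P₂).2.mpr h₂⟩

include hIIA

/-- Since society ties `a` with `b`, it ranks `{a, c}` as it ranks `{b, c}`; and a profile can
carry any voters' ranking of `{a, c}` together with any voters' ranking of `{b, c}`. -/
theorem NullOn.congr_right {a b c : A} (hab : a ≠ b) (hca : c ≠ a) (hcb : c ≠ b)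
    (h : NullOn F a b) : NullOn F a c := by
  refine nullOn_of_agreeOnPair hNI fun P P' => ?_
  choose R hR using fun i => Pref.exists_of_triangle hab hcb.symm hca.symm
    ((P' i).1 a c) ((P i).1 b c) ((P' i).1 a c) (fun h _ => h) Or.inl
  have e := (F P).rel_iff_of_indiff (h P).1 (h P).2 c
  have e' := (F R).rel_iff_of_indiff (h R).1 (h R).2 c
  have hbc := hIIA.agreeOnPair_of_iff hcb.symm fun i => (hR i).2.1.symm
  have hac := hIIA.agreeOnPair_of_iff hca.symm fun i => (hR i).2.2
  exact ⟨e.1.trans <| hbc.1.trans <| e'.1.symm.trans hac.1,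
    e.2.trans <| hbc.2.trans <| e'.2.symm.trans hac.2⟩

theorem nullRule_of_nullOn (hA : ∀ a b : A, ∃ c, c ≠ a ∧ c ≠ b) {a b : A} (hab : a ≠ b)
    (h : NullOn F a b) : NullRule F := by
  intro P x y
  rcases eq_or_ne x y with rfl | hxy
  · exact ⟨(F P).2.1 x, (F P).2.1 x⟩
  refine forall_ne_of_move (Q := NullOn F) hA (fun hab hca hcb h => ?_)
    (fun hab hca hcb h => h.congr_right hIIA hNI hab hca hcb) hab h hxy P
  exact (h.symm.congr_right hIIA hNI hab.symm hcb hca).symm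

end Null

section Unanimity

variable (hIIA : IIA F) (hNI : NonImposition F)
include hIIA hNI

/-- Adding `c` unanimously above `b` keeps the tie of `a` with `b`, so society ranks `{a, c}` as
it ranks `{b, c}`, which is then fixed. -/
theorem nullOn_of_indiff_unanimous {a b c : A} (hab : a ≠ b) (hca : c ≠ a) (hcb : c ≠ b)
    {R₀ : Fin n → Pref A} (hR₀ : ∀ i, (R₀ i).1 a b) (hR₀ab : (F R₀).1 a b)
    (hR₀ba : (F R₀).1 b a) : NullOn F a c := by
  have key : ∀ Q : Fin n → Pref A, ∃ R : Fin n → Pref A, AgreeOnPair (F Q).1 (F R).1 a c ∧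
      (∀ i, (R i).1 c b) ∧ (F R).1 a b ∧ (F R).1 b a := by
    intro Q
    choose R hR using fun i => Pref.exists_of_triangle hca.symm hcb hab
      ((Q i).1 a c) True True (fun _ _ => trivial) fun _ => Or.inr trivial
    have hRab := hIIA.agreeOnPair_of_iff hab fun i => iff_of_true (hR₀ i) ((hR i).2.2.mpr trivial)
    exact ⟨R, hIIA.agreeOnPair_of_iff hca.symm fun i => (hR i).1.symm,
      fun i => (hR i).2.1.mpr trivial, hRab.1.mp hR₀ab, hRab.2.mp hR₀ba⟩
  refine nullOn_of_agreeOnPair hNI fun Q Q' => ?_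
  obtain ⟨R, hQR, hR, hRab, hRba⟩ := key Q
  obtain ⟨R', hQR', hR', hRab', hRba'⟩ := key Q'
  have e := (F R).rel_iff_of_indiff hRab hRba c
  have e' := (F R').rel_iff_of_indiff hRab' hRba' c
  have hbc := hIIA.agreeOnPair_of_iff hcb fun i => iff_of_true (hR i) (hR' i)
  exact ⟨hQR.1.trans <| e.1.trans <| hbc.2.trans <| e'.1.symm.trans hQR'.1.symm,
    hQR.2.trans <| e.2.trans <| hbc.1.trans <| e'.2.symm.trans hQR'.2.symm⟩

variable (hA : ∀ a b : A, ∃ c, c ≠ a ∧ c ≠ b) (hnull : ∀ a b : A, a ≠ b → ¬ NullOn F a b)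
include hA hnull

theorem decisiveOn_univ_or_reverse {a b : A} (hab : a ≠ b) :
    DecisiveOn F univ a b ∨ DecisiveOn (fun P => (F P).reverse) univ a b := by
  obtain ⟨c, hca, hcb⟩ := hA a b
  choose R hR using fun _ : Fin n => Pref.exists_rel hab
  have hRuniv : ∀ i, (R i).1 a b ↔ i ∈ univ := fun i => iff_of_true (hR i) (mem_univ i)
  by_cases hstrict : StrictPart (F R).1 a b
  · exact Or.inl (decisiveOn_of_strictPart hIIA hab hRuniv hstrict)
  by_cases hstrict' : StrictPart (F R).1 b a
  · exact Or.inr (decisiveOn_of_strictPart hIIA.reverse hab hRuniv hstrict')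
  exact (hnull a c hca.symm (nullOn_of_indiff_unanimous hIIA hNI hab hca hcb hR
    ((F R).rel_of_not_strictPart hstrict') ((F R).rel_of_not_strictPart hstrict))).elim

theorem DecisiveOn.univ_right {a b c : A} (hab : a ≠ b) (hca : c ≠ a) (hcb : c ≠ b)
    (h : DecisiveOn F univ a b) : DecisiveOn F univ a c := by
  refine (decisiveOn_univ_or_reverse hIIA hNI hA hnull hca.symm).resolve_right fun hrev => ?_
  suffices ∀ Q, StrictPart (F Q).1 c b by
    obtain ⟨Q, hQ⟩ := hNI b c
    exact (this Q).2 hQ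
  intro Q
  choose R hR using fun i => Pref.exists_of_triangle hca.symm hcb hab
    True ((Q i).1 c b) True (fun _ _ => trivial) fun _ => Or.inl trivial
  have hab' := h R fun i => iff_of_true ((hR i).2.2.mpr trivial) (mem_univ i)
  have hca' : StrictPart (F R).1 c a :=
    hrev R fun i => iff_of_true ((hR i).1.mpr trivial) (mem_univ i)
  exact hIIA.strictPart_of_strictPart hcb (fun i => (hR i).2.1)
    ((F R).strictPart_trans hca' hab')

theorem DecisiveOn.univ_left {a b c : A} (hab : a ≠ b) (hca : c ≠ a) (hcb : c ≠ b)
    (h : DecisiveOn F univ a b) : DecisiveOn F univ c b := by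
  refine (decisiveOn_univ_or_reverse hIIA hNI hA hnull hcb).resolve_right fun hrev => ?_
  suffices ∀ Q, StrictPart (F Q).1 a c by
    obtain ⟨Q, hQ⟩ := hNI c a
    exact (this Q).2 hQ
  intro Q
  choose R hR using fun i => Pref.exists_of_triangle hca.symm hcb hab
    ((Q i).1 a c) True True (fun _ _ => trivial) fun _ => Or.inr trivial
  have hab' := h R fun i => iff_of_true ((hR i).2.2.mpr trivial) (mem_univ i)
  have hbc' : StrictPart (F R).1 b c :=
    hrev R fun i => iff_of_true ((hR i).2.1.mpr trivial) (mem_univ i)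
  exact hIIA.strictPart_of_strictPart hca.symm (fun i => (hR i).1)
    ((F R).strictPart_trans hab' hbc')

theorem decisive_univ_of_decisiveOn_univ {a b : A} (hab : a ≠ b) (h : DecisiveOn F univ a b) :
    Decisive F univ := fun _ _ hxy =>
  forall_ne_of_move hA (fun hab hca hcb h => h.univ_left hIIA hNI hA hnull hab hca hcb)
    (fun hab hca hcb h => h.univ_right hIIA hNI hA hnull hab hca hcb) hab h hxy

end Unanimity

theorem not_decisiveOn_empty (hPar : Decisive F univ) {a b : A} (hab : a ≠ b) :
    ¬ DecisiveOn F ∅ a b := by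
  intro h
  choose R hR using fun _ : Fin n => Pref.exists_rel hab.symm
  have hba := hPar b a hab.symm R fun i => iff_of_true (hR i) (mem_univ i)
  exact hba.2 (h R fun i => iff_of_false ((R i).asymm (hR i)) (notMem_empty i)).1

section Arrow

variable (hIIA : IIA F) (hPar : Decisive F univ)
include hIIA hPar

theorem DecisiveOn.right {S : Finset (Fin n)} {a b c : A} (hab : a ≠ b) (hca : c ≠ a)
    (hcb : c ≠ b) (h : DecisiveOn F S a b) : DecisiveOn F S a c := by
  choose R hR using fun i => Pref.exists_of_triangle hab hcb.symm hca.symm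
    (i ∈ S) True (i ∈ S) (fun h _ => h) Or.inl
  have hbc := hPar b c hcb.symm R fun i => iff_of_true ((hR i).2.1.mpr trivial) (mem_univ i)
  exact decisiveOn_of_strictPart hIIA hca.symm (fun i => (hR i).2.2)
    ((F R).strictPart_trans (h R fun i => (hR i).1) hbc)

theorem DecisiveOn.left {S : Finset (Fin n)} {a b c : A} (hab : a ≠ b) (hca : c ≠ a)
    (hcb : c ≠ b) (h : DecisiveOn F S a b) : DecisiveOn F S c b := by
  choose R hR using fun i => Pref.exists_of_triangle hca hab hcb
    True (i ∈ S) (i ∈ S) (fun _ h => h) Or.inr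
  have hca' := hPar c a hca R fun i => iff_of_true ((hR i).1.mpr trivial) (mem_univ i)
  exact decisiveOn_of_strictPart hIIA hcb (fun i => (hR i).2.2)
    ((F R).strictPart_trans hca' (h R fun i => (hR i).2.1))

variable (hA : ∀ a b : A, ∃ c, c ≠ a ∧ c ≠ b)
include hA

theorem DecisiveOn.decisive {S : Finset (Fin n)} {a b : A} (hab : a ≠ b)
    (h : DecisiveOn F S a b) : Decisive F S := fun _ _ hxy =>
  forall_ne_of_move hA (fun hab hca hcb h => h.left hIIA hPar hab hca hcb)
    (fun hab hca hcb h => h.right hIIA hPar hab hca hcb) hab h hxy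

theorem decisiveOn_of_decisive_subset {S T : Finset (Fin n)} (h : Decisive F S) (hST : S ⊆ T)
    {a b : A} (hab : a ≠ b) : DecisiveOn F T a b := by
  obtain ⟨c, hca, hcb⟩ := hA a b
  choose R hR using fun i => Pref.exists_of_triangle hca.symm hcb hab
    (i ∈ S) True (i ∈ T) (fun h _ => hST h) fun _ => Or.inr trivial
  have hcb' := hPar c b hcb R fun i => iff_of_true ((hR i).2.1.mpr trivial) (mem_univ i)
  exact decisiveOn_of_strictPart hIIA hab (fun i => (hR i).2.2)
    ((F R).strictPart_trans (h a c hca.symm R fun i => (hR i).1) hcb')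

/-- At a profile where `S` ranks `a > b`, `T` ranks `a > c` and `S \ T` ranks `c > b`, society
puts `a` above `b`, hence above `c` unless `c` is strictly above `b`. -/
theorem decisive_or_decisive_sdiff [Nonempty A] {S T : Finset (Fin n)} (h : Decisive F S)
    (hTS : T ⊆ S) : Decisive F T ∨ Decisive F (S \ T) := by
  obtain ⟨a⟩ := ‹Nonempty A›
  obtain ⟨b, hba, -⟩ := hA a a
  obtain ⟨c, hca, hcb⟩ := hA a b
  choose R hR using fun i => Pref.exists_of_triangle hca.symm hcb hba.symm
    (i ∈ T) (i ∈ S \ T) (i ∈ S) (fun h _ => hTS h) fun h => by by_cases i ∈ T <;> simp_all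
  have hab := h a b hba.symm R fun i => (hR i).2.2
  by_cases hcb' : StrictPart (F R).1 c b
  · exact Or.inr (decisiveOn_of_strictPart hIIA hcb (fun i => (hR i).2.1) hcb' |>.decisive
      hIIA hPar hA hcb)
  · exact Or.inl (decisiveOn_of_strictPart hIIA hca.symm (fun i => (hR i).1)
      ((F R).strictPart_of_strictPart_of_rel hab ((F R).rel_of_not_strictPart hcb'))
      |>.decisive hIIA hPar hA hca.symm)

theorem exists_decisive_singleton [Nonempty A] : ∃ i, Decisive F {i} := by
  obtain ⟨S, hS, hmin⟩ := wellFounded_lt.has_min {S : Finset (Fin n) | Decisive F S} ⟨univ, hPar⟩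
  obtain ⟨a⟩ := ‹Nonempty A›
  obtain ⟨b, hba, -⟩ := hA a a
  obtain ⟨i, hi⟩ : S.Nonempty := nonempty_iff_ne_empty.mpr fun hS₀ =>
    not_decisiveOn_empty hPar hba.symm (hS₀ ▸ hS a b hba.symm)
  have hiS := singleton_subset_iff.mpr hi
  refine ⟨i, (decisive_or_decisive_sdiff hIIA hPar hA hS hiS).resolve_right fun h => ?_⟩
  exact hmin _ h (sdiff_ssubset hiS (singleton_nonempty i))

/-- Arrow's theorem. -/
theorem dictatorial_of_decisive_univ [Nonempty A] : Dictatorial F := by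
  classical
  obtain ⟨i, hi⟩ := exists_decisive_singleton hIIA hPar hA
  refine ⟨i, fun P a b hab => ?_⟩
  exact decisiveOn_of_decisive_subset hIIA hPar hA hi (T := univ.filter fun j => (P j).1 a b)
    (by simpa using hab) ((P i).ne_of_rel hab) P (by simp)

end Arrow

theorem exists_ne_ne_of_three_le_card [Fintype A] (hA : 3 ≤ Fintype.card A) (a b : A) :
    ∃ c, c ≠ a ∧ c ≠ b := by
  let e := Fintype.equivFin A
  obtain ⟨k, hka, hkb⟩ := Fin.exists_ne_and_ne_of_two_lt (e a) (e b) hA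
  exact ⟨e.symm k, fun h => hka (e.symm_apply_eq.mp h), fun h => hkb (e.symm_apply_eq.mp h)⟩

end

/-- **Wilson's Theorem.** -/
theorem wilson {A : Type*} [Fintype A] (hA : 3 ≤ Fintype.card A)
    {n : ℕ} (F : (Fin n → Pref A) → WeakOrd A)
    (hIIA : IIA F) (hNI : NonImposition F) :
    NullRule F ∨ Dictatorial F ∨ AntiDictatorial F := by
  have hA₃ := exists_ne_ne_of_three_le_card hA
  rcases em (∃ a b, a ≠ b ∧ NullOn F a b) with ⟨a, b, hab, h⟩ | hnull
  · exact Or.inl (nullRule_of_nullOn hIIA hNI hA₃ hab h)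
  replace hnull : ∀ a b, a ≠ b → ¬ NullOn F a b := fun a b hab h => hnull ⟨a, b, hab, h⟩
  obtain ⟨a, b, hab⟩ := Fintype.one_lt_card_iff.mp (by omega : 1 < Fintype.card A)
  have : Nonempty A := ⟨a⟩
  right
  rcases decisiveOn_univ_or_reverse hIIA hNI hA₃ hnull hab with h | h
  · exact Or.inl <| dictatorial_of_decisive_univ hIIA
      (decisive_univ_of_decisiveOn_univ hIIA hNI hA₃ hnull hab h) hA₃
  · exact Or.inr <| dictatorial_of_decisive_univ hIIA.reverse
      (decisive_univ_of_decisiveOn_univ hIIA.reverse hNI.reverse hA₃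
        (fun a b hab => hnull b a hab.symm) hab h) hA₃
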